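/- L_{n³} = Σ_{A ∈ B_n} (−1)^{σ₀(A)} Per(A)^{n²}, where L_{n³} is the number of Latin cubes of order n, B_n is the set of all n×n×n arrays with entries in {0,1}, σ₀(A) is the number of zero entries of A, and Per(A) = Σ_{σ,τ ∈ S_n} Π_{i=1}^n A_{i,σ(i),τ(i)} is the 3-dimensional hyperpermanent. -/
import Mathlib


/-- A Latin cube of order `n`: a map `[n]³ → [n²]` that is a bijection on each
x-slice, each y-slice, and each z-slice. -/
def IsLatinCube (n : ℕ) (L : Fin n × Fin n × Fin n → Fin (n ^ 2)) : Prop :=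
  (∀ i : Fin n, Function.Bijective fun p : Fin n × Fin n => L (i, p.1, p.2)) ∧
  (∀ j : Fin n, Function.Bijective fun p : Fin n × Fin n => L (p.1, j, p.2)) ∧
  (∀ k : Fin n, Function.Bijective fun p : Fin n × Fin n => L (p.1, p.2, k))

/-- The hyperpermanent of an `n×n×n` 0/1-array (given as a `Bool`-valued array):
`Per(A) = ∑_{σ,τ ∈ S_n} ∏_i A_{i,σ(i),τ(i)}`. -/
def hyperPerBool (n : ℕ) (A : Fin n × Fin n × Fin n → Bool) : ℤ :=
  ∑ σ : Equiv.Perm (Fin n), ∑ τ : Equiv.Perm (Fin n),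
    ∏ i : Fin n, (if A (i, σ i, τ i) then 1 else 0 : ℤ)

namespace LatinAux

variable {n : ℕ}

abbrev P (n : ℕ) := Equiv.Perm (Fin n) × Equiv.Perm (Fin n)

def E (F : Fin (n ^ 2) → P n) : Fin (n ^ 2) × Fin n → Fin n × Fin n × Fin n :=
  fun ki => (ki.2, (F ki.1).1 ki.2, (F ki.1).2 ki.2)

lemma card_eq : Fintype.card (Fin (n ^ 2) × Fin n) =
    Fintype.card (Fin n × Fin n × Fin n) := by
  simp [pow_succ, pow_two]; ring

lemma bij_of_surj {F : Fin (n ^ 2) → P n} (h : Function.Surjective (E F)) :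
    Function.Bijective (E F) :=
  (Fintype.bijective_iff_surjective_and_card _).2 ⟨h, card_eq⟩

section Forward
variable (L : Fin n × Fin n × Fin n → Fin (n ^ 2)) (h : IsLatinCube n L)

/-- for each `m` and row `i`, the unique `(j,k)` with `L (i,j,k) = m`. -/
noncomputable def jk (m : Fin (n ^ 2)) (i : Fin n) : Fin n × Fin n :=
  (Equiv.ofBijective _ (h.1 i)).symm m

lemma L_jk (m : Fin (n ^ 2)) (i : Fin n) :
    L (i, (jk L h m i).1, (jk L h m i).2) = m := by
  exact (Equiv.ofBijective _ (h.1 i)).apply_symm_apply m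

lemma jk_unique {m : Fin (n ^ 2)} {i j k : Fin n} (hjk : L (i, j, k) = m) :
    jk L h m i = (j, k) := by
  have : (Equiv.ofBijective _ (h.1 i)) (j, k) = m := hjk
  simp [jk, ← this]

lemma sigma_inj (m : Fin (n ^ 2)) :
    Function.Injective (fun i => (jk L h m i).1) := by
  intro i i' hii
  have hii' : (jk L h m i).1 = (jk L h m i').1 := hii
  have h1 := L_jk L h m i
  have h2 := L_jk L h m i'
  rw [hii'] at h1
  have := (h.2.1 ((jk L h m i').1)).1 (a₁ := (i, (jk L h m i).2))
    (a₂ := (i', (jk L h m i').2)) (h1.trans h2.symm)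
  exact congrArg Prod.fst this

lemma tau_inj (m : Fin (n ^ 2)) :
    Function.Injective (fun i => (jk L h m i).2) := by
  intro i i' hii
  have hii' : (jk L h m i).2 = (jk L h m i').2 := hii
  have h1 := L_jk L h m i
  have h2 := L_jk L h m i'
  rw [hii'] at h1
  have := (h.2.2 ((jk L h m i').2)).1 (a₁ := (i, (jk L h m i).1))
    (a₂ := (i', (jk L h m i').1)) (h1.trans h2.symm)
  exact congrArg Prod.fst this

/-- the tuple of permutation pairs associated to a Latin cube -/
noncomputable def toF : Fin (n ^ 2) → P n := fun m =>
  (Equiv.ofBijective _ (Finite.injective_iff_bijective.mp (sigma_inj L h m)),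
   Equiv.ofBijective _ (Finite.injective_iff_bijective.mp (tau_inj L h m)))

lemma E_toF (m : Fin (n ^ 2)) (i : Fin n) :
    E (toF L h) (m, i) = (i, (jk L h m i).1, (jk L h m i).2) := rfl

lemma toF_surj : Function.Surjective (E (toF L h)) := by
  rintro ⟨i, j, k⟩
  refine ⟨(L (i, j, k), i), ?_⟩
  rw [E_toF, jk_unique L h rfl]

end Forward

section Backward
variable (F : Fin (n ^ 2) → P n) (hs : Function.Surjective (E F))

noncomputable def eF : Fin (n ^ 2) × Fin n ≃ Fin n × Fin n × Fin n :=
  Equiv.ofBijective _ (bij_of_surj hs)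

/-- the Latin cube associated to an exactly-covering tuple -/
noncomputable def toL : Fin n × Fin n × Fin n → Fin (n ^ 2) :=
  fun p => ((eF F hs).symm p).1

lemma eF_symm_snd (p : Fin n × Fin n × Fin n) : ((eF F hs).symm p).2 = p.1 := by
  have := (eF F hs).apply_symm_apply p
  have : E F ((eF F hs).symm p) = p := this
  exact congrArg Prod.fst this

lemma eF_symm_eq {p : Fin n × Fin n × Fin n} {m : Fin (n ^ 2)} {i : Fin n}
    (hp : E F (m, i) = p) : (eF F hs).symm p = (m, i) := by
  rw [← hp]; exact (eF F hs).symm_apply_apply (m, i)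

lemma toL_eq (m : Fin (n ^ 2)) (i : Fin n) :
    toL F hs (i, (F m).1 i, (F m).2 i) = m := by
  have : (eF F hs).symm (i, (F m).1 i, (F m).2 i) = (m, i) :=
    eF_symm_eq F hs rfl
  simp [toL, this]

lemma toL_spec {i j k : Fin n} {m : Fin (n ^ 2)} (hm : toL F hs (i, j, k) = m) :
    (F m).1 i = j ∧ (F m).2 i = k := by
  have h2 : ((eF F hs).symm (i, j, k)).2 = i := eF_symm_snd F hs _
  have key : (eF F hs).symm (i, j, k) = (m, i) := by
    rw [Prod.ext_iff]; exact ⟨hm, h2⟩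
  have := (eF F hs).apply_symm_apply (i, j, k)
  rw [key] at this
  have : E F (m, i) = (i, j, k) := this
  exact ⟨congrArg (fun q => q.2.1) this, congrArg (fun q => q.2.2) this⟩

lemma toL_latin : IsLatinCube n (toL F hs) := by
  refine ⟨fun i => ?_, fun j => ?_, fun k => ?_⟩
  · rw [Fintype.bijective_iff_injective_and_card]
    constructor
    · intro ⟨j, k⟩ ⟨j', k'⟩ hjk
      have hjk' : toL F hs (i, j, k) = toL F hs (i, j', k') := hjk
      obtain ⟨a1, a2⟩ := toL_spec F hs (m := toL F hs (i, j, k)) rfl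
      obtain ⟨b1, b2⟩ := toL_spec F hs hjk'.symm
      exact Prod.ext (a1.symm.trans b1) (a2.symm.trans b2)
    · simp [pow_two]
  · rw [Fintype.bijective_iff_injective_and_card]
    constructor
    · intro ⟨i, k⟩ ⟨i', k'⟩ hik
      have hik' : toL F hs (i, j, k) = toL F hs (i', j, k') := hik
      obtain ⟨a1, a2⟩ := toL_spec F hs (m := toL F hs (i, j, k)) rfl
      obtain ⟨b1, b2⟩ := toL_spec F hs hik'.symm
      have hii : i = i' := (F _).1.injective (a1.trans b1.symm)
      subst hii
      exact Prod.ext rfl (a2.symm.trans b2)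
    · simp [pow_two]
  · rw [Fintype.bijective_iff_injective_and_card]
    constructor
    · intro ⟨i, j⟩ ⟨i', j'⟩ hij
      have hij' : toL F hs (i, j, k) = toL F hs (i', j', k) := hij
      obtain ⟨a1, a2⟩ := toL_spec F hs (m := toL F hs (i, j, k)) rfl
      obtain ⟨b1, b2⟩ := toL_spec F hs hij'.symm
      have hii : i = i' := (F _).2.injective (a2.trans b2.symm)
      subst hii
      exact Prod.ext rfl (a1.symm.trans b1)
    · simp [pow_two]

end Backward

noncomputable def latinEquiv :
    {L : Fin n × Fin n × Fin n → Fin (n ^ 2) // IsLatinCube n L} ≃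
      {F : Fin (n ^ 2) → P n // Function.Surjective (E F)} where
  toFun := fun ⟨L, h⟩ => ⟨toF L h, toF_surj L h⟩
  invFun := fun ⟨F, hs⟩ => ⟨toL F hs, toL_latin F hs⟩
  left_inv := by
    rintro ⟨L, h⟩
    refine Subtype.ext (funext fun p => ?_)
    obtain ⟨i, j, k⟩ := p
    show toL (toF L h) (toF_surj L h) (i, j, k) = L (i, j, k)
    have hu := jk_unique L h (m := L (i,j,k)) (i := i) (j := j) (k := k) rfl
    have : E (toF L h) (L (i, j, k), i) = (i, j, k) := by
      rw [E_toF, hu]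
    have h2 : (eF _ (toF_surj L h)).symm (i, j, k) = (L (i,j,k), i) :=
      eF_symm_eq _ _ this
    simp [toL, h2]
  right_inv := by
    rintro ⟨F, hs⟩
    refine Subtype.ext (funext fun m => ?_)
    show toF (toL F hs) (toL_latin F hs) m = F m
    have key : ∀ i, jk (toL F hs) (toL_latin F hs) m i = ((F m).1 i, (F m).2 i) := by
      intro i
      exact jk_unique _ _ (toL_eq F hs m i)
    refine Prod.ext (Equiv.ext fun i => ?_) (Equiv.ext fun i => ?_)
    · show (jk (toL F hs) (toL_latin F hs) m i).1 = (F m).1 i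
      rw [key]
    · show (jk (toL F hs) (toL_latin F hs) m i).2 = (F m).2 i
      rw [key]

end LatinAux

open Finset LatinAux in
/-- `L_{n³} = ∑_{A ∈ B_n} (−1)^{σ₀(A)} Per(A)^{n²}`, the sum over all `n×n×n`
0/1-arrays `A`, where `σ₀(A)` is the number of zero entries of `A`. -/
theorem latinCube_count_eq_sum_hyperPer_pow (n : ℕ) :
    (Nat.card {L : Fin n × Fin n × Fin n → Fin (n ^ 2) // IsLatinCube n L} : ℤ) =
      ∑ A : Fin n × Fin n × Fin n → Bool,
        (-1 : ℤ) ^ ((Finset.univ.filter fun p => A p = false).card) *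
          (hyperPerBool n A) ^ (n ^ 2) := by
  classical
  -- sign as a product
  have hsign : ∀ A : Fin n × Fin n × Fin n → Bool,
      ((-1 : ℤ) ^ ((Finset.univ.filter fun p => A p = false).card)) =
        ∏ p : Fin n × Fin n × Fin n, (if A p = false then (-1 : ℤ) else 1) := by
    intro A
    rw [Finset.prod_ite, Finset.prod_const, Finset.prod_const, one_pow, mul_one]
  -- hyperpermanent as a single sum over pairs of permutations
  have hper : ∀ A, hyperPerBool n A =
      ∑ q : P n, ∏ i : Fin n, (if A (i, q.1 i, q.2 i) then (1 : ℤ) else 0) := by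
    intro A
    rw [hyperPerBool]
    exact (Fintype.sum_prod_type
      (fun q : P n => ∏ i : Fin n, (if A (i, q.1 i, q.2 i) then (1 : ℤ) else 0))).symm
  -- the indicator product over a diagram tuple, rewritten cellwise
  have hkey : ∀ (A : Fin n × Fin n × Fin n → Bool) (F : Fin (n ^ 2) → P n),
      (∏ ki : Fin (n ^ 2) × Fin n, (if A (E F ki) then (1 : ℤ) else 0)) =
        ∏ p : Fin n × Fin n × Fin n,
          (if p ∈ Finset.image (E F) Finset.univ then (if A p then (1 : ℤ) else 0) else 1) := by
    intro A F
    rw [Fintype.prod_boole, Finset.prod_ite, Finset.prod_const_one, mul_one,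
      Finset.prod_boole]
    have hiff : (∀ ki : Fin (n ^ 2) × Fin n, A (E F ki) = true) ↔
        (∀ p ∈ Finset.univ.filter (fun p : Fin n × Fin n × Fin n =>
          p ∈ Finset.image (E F) Finset.univ), A p = true) := by
      constructor
      · intro h p hp
        simp only [Finset.mem_filter, Finset.mem_univ, true_and, Finset.mem_image] at hp
        obtain ⟨ki, -, rfl⟩ := hp
        exact h ki
      · intro h ki
        refine h (E F ki) ?_
        simp only [Finset.mem_filter, Finset.mem_univ, true_and, Finset.mem_image]
        exact ⟨ki, rfl⟩
    simp only [hiff]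
    congr
  -- per-tuple inner sum over all arrays
  have hinner : ∀ F : Fin (n ^ 2) → P n,
      (∑ A : Fin n × Fin n × Fin n → Bool,
        ∏ p : Fin n × Fin n × Fin n,
          ((if A p = false then (-1 : ℤ) else 1) *
            (if p ∈ Finset.image (E F) Finset.univ then (if A p then (1 : ℤ) else 0) else 1))) =
        (if Function.Surjective (E F) then (1 : ℤ) else 0) := by
    intro F
    rw [← Fintype.prod_sum (fun p b =>
      (if b = false then (-1 : ℤ) else 1) *
        (if p ∈ Finset.image (E F) Finset.univ then (if b then (1 : ℤ) else 0) else 1))]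
    have : ∀ p : Fin n × Fin n × Fin n,
        (∑ b : Bool, (if b = false then (-1 : ℤ) else 1) *
          (if p ∈ Finset.image (E F) Finset.univ then (if b then (1 : ℤ) else 0) else 1)) =
        (if p ∈ Finset.image (E F) Finset.univ then (1 : ℤ) else 0) := by
      intro p
      by_cases hp : p ∈ Finset.image (E F) Finset.univ <;> simp [hp]
    rw [Finset.prod_congr rfl fun p _ => this p, Fintype.prod_boole]
    have hiff : (∀ p : Fin n × Fin n × Fin n, p ∈ Finset.image (E F) Finset.univ) ↔
        Function.Surjective (E F) := by
      simp only [Finset.mem_image, Finset.mem_univ, true_and, Function.Surjective]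
    simp only [hiff]
  calc (Nat.card {L : Fin n × Fin n × Fin n → Fin (n ^ 2) // IsLatinCube n L} : ℤ)
      = ((Finset.univ.filter fun F : Fin (n ^ 2) → P n =>
            Function.Surjective (E F)).card : ℤ) := by
        rw [Nat.card_congr latinEquiv, Nat.card_eq_fintype_card, Fintype.card_subtype]
    _ = ∑ F : Fin (n ^ 2) → P n,
          (if Function.Surjective (E F) then (1 : ℤ) else 0) := by
        rw [Finset.sum_boole]
    _ = ∑ F : Fin (n ^ 2) → P n,
          ∑ A : Fin n × Fin n × Fin n → Bool,
          ∏ p : Fin n × Fin n × Fin n,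
            ((if A p = false then (-1 : ℤ) else 1) *
              (if p ∈ Finset.image (E F) Finset.univ then (if A p then (1 : ℤ) else 0) else 1)) := by
        exact Finset.sum_congr rfl fun F _ => (hinner F).symm
    _ = ∑ A : Fin n × Fin n × Fin n → Bool,
        (-1 : ℤ) ^ ((Finset.univ.filter fun p => A p = false).card) *
          (hyperPerBool n A) ^ (n ^ 2) := by
        rw [Finset.sum_comm]
        refine Finset.sum_congr rfl fun A _ => ?_
        rw [hsign A, hper A, Fintype.sum_pow, Finset.mul_sum]
        refine Finset.sum_congr rfl fun F _ => ?_
        rw [Finset.prod_mul_distrib]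
        congr 1
        rw [← hkey A F]
        exact Fintype.prod_prod_type _
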